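/- arXiv:2510.01946 — 2 statements merged into one kernel-verified Lean document; each statement's English description precedes it below -/
import Mathlib

section
/- The category of Petri nets is cocomplete (has all small colimits). -/
open CategoryTheory

/-- A Petri net: sets of transitions and places with source and target functions
valued in the free commutative monoid `ℕ[S] = S →₀ ℕ` on places. -/
structure PetriNet : Type 1 where
  T : Type
  S : Type
  src : T → (S →₀ ℕ)
  tgt : T → (S →₀ ℕ)

/-- A morphism of Petri nets: functions on transitions and places commuting with
source and target via the induced homomorphism `ℕ[g] = Finsupp.mapDomain g`. -/
@[ext]
structure PetriHom (P Q : PetriNet) where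
  ft : P.T → Q.T
  fs : P.S → Q.S
  hsrc : ∀ τ, Q.src (ft τ) = Finsupp.mapDomain fs (P.src τ)
  htgt : ∀ τ, Q.tgt (ft τ) = Finsupp.mapDomain fs (P.tgt τ)

/-- The category `Petri` of Petri nets. -/
instance : Category PetriNet where
  Hom := PetriHom
  id P := ⟨id, id, fun τ => by simp [Finsupp.mapDomain_id], fun τ => by simp [Finsupp.mapDomain_id]⟩
  comp {P Q R} f g :=
    ⟨g.ft ∘ f.ft, g.fs ∘ f.fs,
      fun τ => by simp [Function.comp, g.hsrc, f.hsrc, Finsupp.mapDomain_comp],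
      fun τ => by simp [Function.comp, g.htgt, f.htgt, Finsupp.mapDomain_comp]⟩
  id_comp f := rfl
  comp_id f := rfl
  assoc f g h := rfl

/-! A Petri net is the same thing as a function `T → ℕ[S] × ℕ[S]`, i.e. an object of the comma
category `𝟭 Type ↓ R` with `R S = ℕ[S] × ℕ[S]`, and morphisms match on the nose. Colimits in a comma
category `L ↓ R` exist as soon as both factors have them and `L` preserves them, with no condition
on `R`; here `L` is the identity, so a colimit of Petri nets is computed separately on transitions
and on places, in `Type`. -/

namespace PetriNet

noncomputable def markingPairs : Type ⥤ Type where
  obj S := (S →₀ ℕ) × (S →₀ ℕ)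
  map g := ↾(Prod.map (Finsupp.mapDomain g) (Finsupp.mapDomain g))
  map_id _ := by ext ⟨a, b⟩ <;> simp [ConcreteCategory.coe_id]
  map_comp _ _ := by ext ⟨a, b⟩ <;> simp [ConcreteCategory.coe_comp, Finsupp.mapDomain_comp]

noncomputable def equivComma : PetriNet ≌ Comma (𝟭 Type) markingPairs where
  functor :=
    { obj P := ⟨P.T, P.S, ↾fun τ => (P.src τ, P.tgt τ)⟩
      map f := ⟨↾f.ft, ↾f.fs, by ext τ; exact Prod.ext (f.hsrc τ) (f.htgt τ)⟩ }
  inverse :=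
    { obj X := ⟨X.left, X.right, fun τ => (X.hom τ).1, fun τ => (X.hom τ).2⟩
      map f := ⟨f.left, f.right, fun τ => congrArg Prod.fst (ConcreteCategory.congr_hom f.w τ),
        fun τ => congrArg Prod.snd (ConcreteCategory.congr_hom f.w τ)⟩ }
  unitIso := Iso.refl _
  counitIso := Iso.refl _

end PetriNet

/-- The category of Petri nets is cocomplete (has all small colimits). -/
theorem petri_cocomplete : Limits.HasColimits PetriNet :=
  Adjunction.has_colimits_of_equivalence PetriNet.equivComma.functor
end

section
/- In a commutative monoidal category, the interchange law holds: for morphisms a : x → y, b : x' → y', c : y → z, d : y' → z', one has (c ∘ a) + (d ∘ b) = (c + d) ∘ (a + b), where + denotes the monoidal product; consequently every morphism in the free commutative monoidal category on a Petri net can be written as a composite f_1 ∘ f_2 ∘ … ∘ f_n in which each f_i is a sum of generating transitions and identities. -/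
open CategoryTheory

/-- Markings of a Petri net: the free commutative monoid `ℕ[S]` on places. -/
abbrev Marking (P : PetriNet) := P.S →₀ ℕ

noncomputable instance (P : PetriNet) : AddCommMonoid (Marking P) :=
  inferInstanceAs (AddCommMonoid (P.S →₀ ℕ))

/-- Formal expressions for morphisms of the free commutative monoidal category on a Petri
net: generated by the transitions under identities, composition and monoidal sum. -/
inductive FExpr (P : PetriNet) : Marking P → Marking P → Type
  | gen (τ : P.T) : FExpr P (P.src τ) (P.tgt τ)
  | id (m : Marking P) : FExpr P m m
  | comp {a b c : Marking P} : FExpr P a b → FExpr P b c → FExpr P a c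
  | add {a b c d : Marking P} : FExpr P a b → FExpr P c d → FExpr P (a + c) (b + d)

/-- Recasting an expression along equalities of its endpoints. -/
def FExpr.recast {P : PetriNet} {a b a' b' : Marking P} (h1 : a = a') (h2 : b = b')
    (e : FExpr P a b) : FExpr P a' b' := h1 ▸ h2 ▸ e

/-- The congruence generating the free commutative monoidal category: category laws,
the interchange law, and the commutative monoid laws for the monoidal sum. -/
inductive FRel (P : PetriNet) : ∀ {a b : Marking P}, FExpr P a b → FExpr P a b → Prop
  | refl {a b} (e : FExpr P a b) : FRel P e e
  | symm {a b} {e₁ e₂ : FExpr P a b} : FRel P e₁ e₂ → FRel P e₂ e₁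
  | trans {a b} {e₁ e₂ e₃ : FExpr P a b} : FRel P e₁ e₂ → FRel P e₂ e₃ → FRel P e₁ e₃
  | comp_congr {a b c} {e₁ e₂ : FExpr P a b} {f₁ f₂ : FExpr P b c} :
      FRel P e₁ e₂ → FRel P f₁ f₂ → FRel P (e₁.comp f₁) (e₂.comp f₂)
  | add_congr {a b c d} {e₁ e₂ : FExpr P a b} {f₁ f₂ : FExpr P c d} :
      FRel P e₁ e₂ → FRel P f₁ f₂ → FRel P (e₁.add f₁) (e₂.add f₂)
  | assoc {a b c d} (e : FExpr P a b) (f : FExpr P b c) (g : FExpr P c d) :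
      FRel P ((e.comp f).comp g) (e.comp (f.comp g))
  | id_comp {a b} (e : FExpr P a b) : FRel P ((FExpr.id a).comp e) e
  | comp_id {a b} (e : FExpr P a b) : FRel P (e.comp (FExpr.id b)) e
  | interchange {a b c a' b' c'} (e : FExpr P a b) (f : FExpr P b c)
      (e' : FExpr P a' b') (f' : FExpr P b' c') :
      FRel P ((e.comp f).add (e'.comp f')) ((e.add e').comp (f.add f'))
  | add_id {m n : Marking P} : FRel P ((FExpr.id m).add (FExpr.id n)) (FExpr.id (m + n))
  | add_assoc {a b c d e f} (x : FExpr P a b) (y : FExpr P c d) (z : FExpr P e f) :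
      FRel P (((x.add y).add z).recast (add_assoc a c e) (add_assoc b d f))
        (x.add (y.add z))
  | add_comm {a b c d} (x : FExpr P a b) (y : FExpr P c d) :
      FRel P ((x.add y).recast (add_comm a c) (add_comm b d)) (y.add x)
  | add_zero {a b} (x : FExpr P a b) :
      FRel P ((x.add (FExpr.id 0)).recast (add_zero a) (add_zero b)) x

/-- Morphisms of the free commutative monoidal category on `P`: expressions modulo the
congruence. -/
abbrev FHom (P : PetriNet) (a b : Marking P) := Quot (@FRel P a b)

/-- The free commutative monoidal category `FP` on a Petri net `P` (as a category). -/
def FP (P : PetriNet) := Marking P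

noncomputable instance (P : PetriNet) : AddCommMonoid (FP P) := inferInstanceAs (AddCommMonoid (Marking P))

instance FP.category (P : PetriNet) : Category (FP P) where
  Hom a b := FHom P a b
  id a := Quot.mk _ (FExpr.id a)
  comp {a b c} f g :=
    Quot.lift₂ (fun e₁ e₂ => Quot.mk _ (e₁.comp e₂))
      (fun e f₁ f₂ h => Quot.sound (FRel.comp_congr (FRel.refl e) h))
      (fun e₁ e₂ f h => Quot.sound (FRel.comp_congr h (FRel.refl f))) f g
  id_comp f := by
    induction f using Quot.ind
    exact Quot.sound (FRel.id_comp _)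
  comp_id f := by
    induction f using Quot.ind
    exact Quot.sound (FRel.comp_id _)
  assoc {a b c d} f g h := by
    induction f using Quot.ind
    induction g using Quot.ind
    induction h using Quot.ind
    exact Quot.sound (FRel.assoc _ _ _)

/-- Markings regarded as objects of `FP`. -/
def toFP {P : PetriNet} (m : Marking P) : FP P := m

/-- The generating morphism of `FP` corresponding to a transition. -/
def qgen {P : PetriNet} (τ : P.T) : toFP (P.src τ) ⟶ toFP (P.tgt τ) :=
  show FHom P (P.src τ) (P.tgt τ) from Quot.mk _ (FExpr.gen τ)

/-- The monoidal sum of morphisms in `FP`. -/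
def qadd {P : PetriNet} {a b c d : FP P} (f : a ⟶ b) (g : c ⟶ d) :
    (a + c : FP P) ⟶ (b + d : FP P) :=
  show FHom P (a + c) (b + d) from
    Quot.lift₂ (fun e₁ e₂ => Quot.mk _ (e₁.add e₂))
      (fun e f₁ f₂ h => Quot.sound (FRel.add_congr (FRel.refl e) h))
      (fun e₁ e₂ f h => Quot.sound (FRel.add_congr h (FRel.refl f)))
      (show FHom P a b from f) (show FHom P c d from g)

/-- A commutative monoidal category (a commutative monoid object in `Cat`), written
additively. -/
class CommMonoidalCat (C : Type u) [Category.{v} C] extends AddCommMonoid C where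
  addHom : ∀ {a b c d : C}, (a ⟶ b) → (c ⟶ d) → ((a + c) ⟶ (b + d))
  addHom_id : ∀ a c : C, addHom (𝟙 a) (𝟙 c) = 𝟙 (a + c)
  addHom_comp : ∀ {a b c a' b' c' : C} (f : a ⟶ b) (g : b ⟶ c) (f' : a' ⟶ b') (g' : b' ⟶ c'),
    addHom (f ≫ g) (f' ≫ g') = addHom f f' ≫ addHom g g'
  addHom_assoc : ∀ {a b c d e f : C} (u : a ⟶ b) (v : c ⟶ d) (w : e ⟶ f),
    addHom (addHom u v) w =
      eqToHom (add_assoc a c e) ≫ addHom u (addHom v w) ≫ eqToHom (add_assoc b d f).symm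
  addHom_comm : ∀ {a b c d : C} (u : a ⟶ b) (v : c ⟶ d),
    addHom u v = eqToHom (add_comm a c) ≫ addHom v u ≫ eqToHom (add_comm d b)
  addHom_zero : ∀ {a b : C} (u : a ⟶ b),
    addHom u (𝟙 (0 : C)) = eqToHom (add_zero a) ≫ u ≫ eqToHom (add_zero b).symm

/-- Expressions which are monoidal sums of generating transitions and identities. -/
inductive IsLayer {P : PetriNet} : ∀ {a b : Marking P}, FExpr P a b → Prop
  | gen (τ : P.T) : IsLayer (FExpr.gen τ)
  | id (m : Marking P) : IsLayer (FExpr.id m)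
  | add {a b c d} {e : FExpr P a b} {e' : FExpr P c d} :
      IsLayer e → IsLayer e' → IsLayer (e.add e')

/-- Expressions which are composites `f₁ ∘ f₂ ∘ … ∘ fₙ` of layers. -/
inductive IsLayerComposite {P : PetriNet} : ∀ {a b : Marking P}, FExpr P a b → Prop
  | layer {a b} {e : FExpr P a b} : IsLayer e → IsLayerComposite e
  | comp {a b c} {e : FExpr P a b} {e' : FExpr P b c} :
      IsLayer e → IsLayerComposite e' → IsLayerComposite (e.comp e')

/-! The interchange law is functoriality of the monoidal sum. For the decomposition, every
expression is related by the congruence to a composite of layers, by structural induction: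
composites of layer composites are layer composites by associativity, and for sums the interchange
law rewrites `(l ≫ r) + f` as `(l + 𝟙) ≫ (r + f)` after padding `f` as `𝟙 ≫ f`, so the layers of
the two summands are added in parallel, the shorter side being padded with identities. -/

section LayerDecomposition

variable {P : PetriNet}

def FExpr.HasLayerDecomposition {a b : Marking P} (e : FExpr P a b) : Prop :=
  ∃ g : FExpr P a b, FRel P e g ∧ IsLayerComposite g

theorem FExpr.HasLayerDecomposition.of_frel {a b : Marking P} {e e' : FExpr P a b}
    (h : FRel P e e') (he' : e'.HasLayerDecomposition) : e.HasLayerDecomposition :=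
  let ⟨g, hg, cg⟩ := he'
  ⟨g, FRel.trans h hg, cg⟩

theorem IsLayerComposite.hasLayerDecomposition {a b : Marking P}
    {e : FExpr P a b} (he : IsLayerComposite e) : e.HasLayerDecomposition :=
  ⟨e, FRel.refl e, he⟩

theorem IsLayer.hasLayerDecomposition_add {a b c d : Marking P}
    {e : FExpr P a b} (he : IsLayer e) {f : FExpr P c d} (hf : IsLayerComposite f) :
    (e.add f).HasLayerDecomposition := by
  induction hf generalizing a b e with
  | layer hl => exact (IsLayerComposite.layer (he.add hl)).hasLayerDecomposition
  | @comp _ _ _ l rest hl _ ih =>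
    obtain ⟨g, hg, cg⟩ := ih (IsLayer.id b)
    have hpad : FRel P (e.add (l.comp rest)) ((e.comp (FExpr.id b)).add (l.comp rest)) :=
      FRel.add_congr (FRel.symm (FRel.comp_id e)) (FRel.refl _)
    exact ⟨_, FRel.trans hpad (FRel.trans (FRel.interchange _ _ _ _)
      (FRel.comp_congr (FRel.refl _) hg)), IsLayerComposite.comp (he.add hl) cg⟩

theorem IsLayerComposite.hasLayerDecomposition_add {a b c d : Marking P}
    {e : FExpr P a b} {f : FExpr P c d} (he : IsLayerComposite e) (hf : IsLayerComposite f) :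
    (e.add f).HasLayerDecomposition := by
  induction he with
  | layer hl => exact hl.hasLayerDecomposition_add hf
  | @comp _ _ _ l rest hl _ ih =>
    obtain ⟨g, hg, cg⟩ := ih
    have hpad : FRel P ((l.comp rest).add f) ((l.comp rest).add ((FExpr.id c).comp f)) :=
      FRel.add_congr (FRel.refl _) (FRel.symm (FRel.id_comp f))
    exact ⟨_, FRel.trans hpad (FRel.trans (FRel.interchange _ _ _ _)
      (FRel.comp_congr (FRel.refl _) hg)), IsLayerComposite.comp (hl.add (IsLayer.id c)) cg⟩

theorem IsLayerComposite.hasLayerDecomposition_comp {a b c : Marking P}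
    {e : FExpr P a b} {f : FExpr P b c} (he : IsLayerComposite e) (hf : IsLayerComposite f) :
    (e.comp f).HasLayerDecomposition := by
  induction he generalizing c with
  | layer hl => exact (IsLayerComposite.comp hl hf).hasLayerDecomposition
  | comp hl _ ih =>
    obtain ⟨g, hg, cg⟩ := ih hf
    exact ⟨_, FRel.trans (FRel.assoc _ _ _) (FRel.comp_congr (FRel.refl _) hg),
      IsLayerComposite.comp hl cg⟩

theorem FExpr.HasLayerDecomposition.add {a b c d : Marking P} {e : FExpr P a b} {f : FExpr P c d}
    (he : e.HasLayerDecomposition) (hf : f.HasLayerDecomposition) :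
    (e.add f).HasLayerDecomposition :=
  let ⟨_, hg₁, cg₁⟩ := he
  let ⟨_, hg₂, cg₂⟩ := hf
  (cg₁.hasLayerDecomposition_add cg₂).of_frel (FRel.add_congr hg₁ hg₂)

theorem FExpr.HasLayerDecomposition.comp {a b c : Marking P} {e : FExpr P a b} {f : FExpr P b c}
    (he : e.HasLayerDecomposition) (hf : f.HasLayerDecomposition) :
    (e.comp f).HasLayerDecomposition :=
  let ⟨_, hg₁, cg₁⟩ := he
  let ⟨_, hg₂, cg₂⟩ := hf
  (cg₁.hasLayerDecomposition_comp cg₂).of_frel (FRel.comp_congr hg₁ hg₂)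

theorem FExpr.hasLayerDecomposition {a b : Marking P} (e : FExpr P a b) :
    e.HasLayerDecomposition := by
  induction e with
  | gen τ => exact (IsLayerComposite.layer (IsLayer.gen τ)).hasLayerDecomposition
  | id m => exact (IsLayerComposite.layer (IsLayer.id m)).hasLayerDecomposition
  | comp _ _ ihe ihf => exact ihe.comp ihf
  | add _ _ ihe ihf => exact ihe.add ihf

end LayerDecomposition

/-- In a commutative monoidal category the interchange law
`(c ∘ a) + (d ∘ b) = (c + d) ∘ (a + b)` holds; consequently every morphism of the free
commutative monoidal category on a Petri net can be written as a composite
`f₁ ∘ f₂ ∘ … ∘ fₙ` in which each `fᵢ` is a monoidal sum of generating transitions and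
identities. -/
theorem interchange_and_decomposition :
    (∀ (C : Type u) (_ : Category.{v} C) (_ : CommMonoidalCat C)
      {x y z x' y' z' : C} (a : x ⟶ y) (c : y ⟶ z) (b : x' ⟶ y') (d : y' ⟶ z'),
      CommMonoidalCat.addHom (a ≫ c) (b ≫ d) =
        CommMonoidalCat.addHom a b ≫ CommMonoidalCat.addHom c d) ∧
    (∀ (P : PetriNet) (a b : FP P) (f : a ⟶ b),
      ∃ e : FExpr P a b, Quot.mk _ e = f ∧ IsLayerComposite e) := by
  refine ⟨fun C _ _ _ _ _ _ _ _ a c b d => CommMonoidalCat.addHom_comp a c b d, ?_⟩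
  rintro P a b ⟨e⟩
  obtain ⟨g, hg, cg⟩ := e.hasLayerDecomposition
  exact ⟨g, Quot.sound (FRel.symm hg), cg⟩
end
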